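/- Let μ = N(θ₁, Σ₁) and ν = N(θ₂, Σ₂) be Gaussian measures on ℝ^n with densities f₁, f₂, and let T be a Borel automorphism of ℝ^n with μT⁻¹ = N(φ₁, Ψ₁) and νT⁻¹ = N(φ₂, Ψ₂), with densities g₁, g₂. Then for every real t, (g₁/g₂)(T(x))^{2t} = (f₁/f₂)(x)^{2t} for almost every x (Lebesgue). -/

import Mathlib

open Matrix MeasureTheory

/-- Density of the `n`-variate Gaussian with mean `θ` and covariance `S`. -/
noncomputable def gaussianPdf {n : ℕ} (θ : Fin n → ℝ) (S : Matrix (Fin n) (Fin n) ℝ)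
    (x : Fin n → ℝ) : ℝ :=
  Real.sqrt (((2 * Real.pi) ^ n * S.det)⁻¹) *
    Real.exp (-(1 / 2) * ((x - θ) ⬝ᵥ S⁻¹.mulVec (x - θ)))

/-- The `n`-variate Gaussian measure `N(θ, S)` on `ℝⁿ`. -/
noncomputable def gaussianMeasure {n : ℕ} (θ : Fin n → ℝ) (S : Matrix (Fin n) (Fin n) ℝ) :
    Measure (Fin n → ℝ) :=
  volume.withDensity fun x => ENNReal.ofReal (gaussianPdf θ S x)

lemma gaussianPdf_pos {n : ℕ} (θ : Fin n → ℝ) {S : Matrix (Fin n) (Fin n) ℝ}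
    (hS : S.PosDef) (x : Fin n → ℝ) : 0 < gaussianPdf θ S x := by
  have h2π : (0:ℝ) < 2 * Real.pi := by positivity
  exact mul_pos (Real.sqrt_pos.2 (inv_pos.2 (mul_pos (pow_pos h2π n) hS.det_pos)))
    (Real.exp_pos _)

lemma measurable_gaussianPdf {n : ℕ} (θ : Fin n → ℝ) (S : Matrix (Fin n) (Fin n) ℝ) :
    Measurable (gaussianPdf θ S) := by
  unfold gaussianPdf
  refine measurable_const.mul (Real.measurable_exp.comp (Measurable.const_mul ?_ _))
  simp only [dotProduct, Matrix.mulVec, Pi.sub_apply]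
  exact Finset.measurable_sum _ fun i _ =>
    ((measurable_pi_apply i).sub measurable_const).mul
      (Finset.measurable_sum _ fun j _ =>
        measurable_const.mul ((measurable_pi_apply j).sub measurable_const))

/-- Commuting `map` along an equivalence with `withDensity`. -/
lemma map_withDensity_equiv {α β : Type*} [MeasurableSpace α] [MeasurableSpace β]
    (e : α ≃ β) (he : Measurable e) (μ : Measure α) (g : β → ENNReal) (hg : Measurable g) :
    Measure.map e (μ.withDensity (g ∘ e)) = (Measure.map e μ).withDensity g := by
  ext s hs
  rw [Measure.map_apply he hs, withDensity_apply _ hs,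
    withDensity_apply _ (he hs), setLIntegral_map hs hg he]
  rfl

theorem gaussian_density_ratio_invariance
    {n : ℕ} (T : (Fin n → ℝ) ≃ (Fin n → ℝ))
    (hT : Measurable T) (hTinv : Measurable T.symm)
    (θ₁ θ₂ φ₁ φ₂ : Fin n → ℝ)
    (S₁ S₂ P₁ P₂ : Matrix (Fin n) (Fin n) ℝ)
    (hS₁ : S₁.PosDef) (hS₂ : S₂.PosDef) (hP₁ : P₁.PosDef) (hP₂ : P₂.PosDef)
    (hmap₁ : Measure.map T (gaussianMeasure θ₁ S₁) = gaussianMeasure φ₁ P₁)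
    (hmap₂ : Measure.map T (gaussianMeasure θ₂ S₂) = gaussianMeasure φ₂ P₂)
    (t : ℝ) :
    ∀ᵐ x : Fin n → ℝ,
      (gaussianPdf φ₁ P₁ (T x) / gaussianPdf φ₂ P₂ (T x)) ^ (2 * t) =
        (gaussianPdf θ₁ S₁ x / gaussianPdf θ₂ S₂ x) ^ (2 * t) := by
  set f₁ := gaussianPdf θ₁ S₁ with hf₁def
  set f₂ := gaussianPdf θ₂ S₂ with hf₂def
  set g₁ := gaussianPdf φ₁ P₁ with hg₁def
  set g₂ := gaussianPdf φ₂ P₂ with hg₂def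
  have hf₁m := measurable_gaussianPdf θ₁ S₁
  have hf₂m := measurable_gaussianPdf θ₂ S₂
  have hg₁m := measurable_gaussianPdf φ₁ P₁
  have hg₂m := measurable_gaussianPdf φ₂ P₂
  have hf₁p := gaussianPdf_pos θ₁ hS₁
  have hf₂p := gaussianPdf_pos θ₂ hS₂
  have hg₁p := gaussianPdf_pos φ₁ hP₁
  have hg₂p := gaussianPdf_pos φ₂ hP₂
  -- the candidate densities
  set u : (Fin n → ℝ) → ENNReal := fun y => ENNReal.ofReal (f₁ (T.symm y) / f₂ (T.symm y)) with hu
  set v : (Fin n → ℝ) → ENNReal := fun y => ENNReal.ofReal (g₁ y / g₂ y) with hv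
  have hum : Measurable u := ((hf₁m.comp hTinv).div (hf₂m.comp hTinv)).ennreal_ofReal
  have hvm : Measurable v := (hg₁m.div hg₂m).ennreal_ofReal
  -- μ₁ = μ₂.withDensity (u ∘ T)
  have hμ : gaussianMeasure θ₁ S₁ = (gaussianMeasure θ₂ S₂).withDensity (u ∘ T) := by
    rw [gaussianMeasure, gaussianMeasure, ← withDensity_mul _ hf₂m.ennreal_ofReal
      (hum.comp hT)]
    congr 1
    funext x
    have : f₂ x * (f₁ x / f₂ x) = f₁ x := by
      rw [mul_comm]; exact div_mul_cancel₀ _ (hf₂p x).ne'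
    simp only [Pi.mul_apply, Function.comp_apply, hu, Equiv.symm_apply_apply,
      ← ENNReal.ofReal_mul (hf₂p x).le, this]
    exact congrArg ENNReal.ofReal this.symm
  -- ν₁ = ν₂.withDensity v
  have hν : gaussianMeasure φ₁ P₁ = (gaussianMeasure φ₂ P₂).withDensity v := by
    rw [gaussianMeasure, gaussianMeasure, ← withDensity_mul _ hg₂m.ennreal_ofReal hvm]
    congr 1
    funext y
    have : g₂ y * (g₁ y / g₂ y) = g₁ y := by
      rw [mul_comm]; exact div_mul_cancel₀ _ (hg₂p y).ne'
    simp only [Pi.mul_apply, hv, ← ENNReal.ofReal_mul (hg₂p y).le, this]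
    exact congrArg ENNReal.ofReal this.symm
  -- transporting hμ through T
  have hmapν : gaussianMeasure φ₁ P₁ = (gaussianMeasure φ₂ P₂).withDensity u := by
    rw [← hmap₁, hμ, map_withDensity_equiv T hT _ u hum, hmap₂]
  -- σ-finiteness of ν₂
  have hσ : SigmaFinite (gaussianMeasure φ₂ P₂) := by
    rw [gaussianMeasure]; infer_instance
  have key : u =ᵐ[gaussianMeasure φ₂ P₂] v := by
    have := hσ
    exact (withDensity_eq_iff_of_sigmaFinite hum.aemeasurable hvm.aemeasurable).1
      (hmapν.symm.trans hν)
  -- move to the Lebesgue measure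
  have hvolν : u =ᵐ[volume] v := by
    rw [gaussianMeasure] at key
    exact (withDensity_ae_eq hg₂m.ennreal_ofReal.aemeasurable
      (Filter.Eventually.of_forall fun y => by
        simp [ENNReal.ofReal_eq_zero, not_le.2 (hg₂p y)])).1 key
  -- pull back along T
  have hν₂ac : gaussianMeasure φ₂ P₂ ≪ volume := by
    rw [gaussianMeasure]; exact withDensity_absolutelyContinuous _ _
  have hTae : ∀ᵐ x ∂(gaussianMeasure θ₂ S₂), u (T x) = v (T x) := by
    have h1 : ∀ᵐ y ∂(Measure.map T (gaussianMeasure θ₂ S₂)), u y = v y := by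
      rw [hmap₂]; exact hν₂ac.ae_le hvolν
    exact ae_of_ae_map hT.aemeasurable h1
  have hvolμ₂ : volume ≪ gaussianMeasure θ₂ S₂ := by
    rw [gaussianMeasure]
    exact withDensity_absolutelyContinuous' hf₂m.ennreal_ofReal.aemeasurable
      (Filter.Eventually.of_forall fun x => by
        simp [ENNReal.ofReal_eq_zero, not_le.2 (hf₂p x)])
  filter_upwards [hvolμ₂.ae_le hTae] with x hx
  have hx' : ENNReal.ofReal (f₁ x / f₂ x) = ENNReal.ofReal (g₁ (T x) / g₂ (T x)) := by
    simpa [hu, hv, Equiv.symm_apply_apply] using hx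
  have hreal : g₁ (T x) / g₂ (T x) = f₁ x / f₂ x := by
    have := (ENNReal.ofReal_eq_ofReal_iff
      (div_nonneg (hf₁p x).le (hf₂p x).le)
      (div_nonneg (hg₁p (T x)).le (hg₂p (T x)).le)).1 hx'
    linarith
  rw [hreal]
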